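/- Two model structures on the same category with the same class of cofibrations and the same class of fibrant objects are equal (they have the same weak equivalences and fibrations). -/

import Mathlib

open CategoryTheory Limits

universe v u

/-- `f` is a retract of `g` in the arrow category. -/
def IsRetractOfHom {M : Type u} [Category.{v} M] {X Y A B : M} (f : X ⟶ Y) (g : A ⟶ B) : Prop :=
  ∃ (i : X ⟶ A) (r : A ⟶ X) (i' : Y ⟶ B) (r' : B ⟶ Y),
    i ≫ r = 𝟙 X ∧ i' ≫ r' = 𝟙 Y ∧ i ≫ g = f ≫ i' ∧ g ≫ r' = r ≫ f

/-- A class of morphisms is closed under retracts. -/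
def ClosedUnderRetracts {M : Type u} [Category.{v} M] (W : MorphismProperty M) : Prop :=
  ∀ ⦃X Y A B : M⦄ (f : X ⟶ Y) (g : A ⟶ B), IsRetractOfHom f g → W g → W f

/-- A (closed, Quillen) model structure on a category `M`: three classes of morphisms,
weak equivalences `W`, cofibrations `Cof` and fibrations `Fib`, satisfying
two-out-of-three, closure under retracts, the lifting axioms and the factorization
axioms. -/
structure ModelStructure (M : Type u) [Category.{v} M] where
  W : MorphismProperty M
  Cof : MorphismProperty M
  Fib : MorphismProperty M
  w_id : ∀ X : M, W (𝟙 X)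
  two_out_of_three : W.HasTwoOutOfThreeProperty
  w_retract : ClosedUnderRetracts W
  cof_retract : ClosedUnderRetracts Cof
  fib_retract : ClosedUnderRetracts Fib
  lift_acof_fib : ∀ {A B X Y : M} (i : A ⟶ B) (p : X ⟶ Y),
    Cof i → W i → Fib p → HasLiftingProperty i p
  lift_cof_afib : ∀ {A B X Y : M} (i : A ⟶ B) (p : X ⟶ Y),
    Cof i → Fib p → W p → HasLiftingProperty i p
  fact_acof_fib : ∀ {X Y : M} (f : X ⟶ Y),
    ∃ (Z : M) (i : X ⟶ Z) (p : Z ⟶ Y), Cof i ∧ W i ∧ Fib p ∧ i ≫ p = f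
  fact_cof_afib : ∀ {X Y : M} (f : X ⟶ Y),
    ∃ (Z : M) (i : X ⟶ Z) (p : Z ⟶ Y), Cof i ∧ Fib p ∧ W p ∧ i ≫ p = f

namespace ModelStructure

variable {M : Type u} [Category.{v} M] (S : ModelStructure M)

/-- An object is fibrant if the map to the terminal object is a fibration. -/
def Fibrant [HasTerminal M] (X : M) : Prop := S.Fib (terminal.from X)

/-- An object is cofibrant if the map from the initial object is a cofibration. -/
def Cofibrant [HasInitial M] (X : M) : Prop := S.Cof (initial.to X)

end ModelStructure

/-!
Trivial fibrations are the maps with the right lifting property against cofibrations, so `S`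
and `T` share them. The heart of the argument is Joyal's trick: an `S`-trivial cofibration
`j : C ⟶ D` between fibrant objects has a retraction `ρ`; factoring `ρ` in `T` as a cofibration
`c` followed by a (common) trivial fibration makes `c` an `S`-trivial cofibration out of a
fibrant object, so `c` has a retraction too, and then `j` is a retract of the `T`-weak
equivalence `j ≫ c`. From this, `T`-fibrations between fibrant objects are `S`-fibrations, and
fibrant replacement extends the comparison of weak equivalences to arbitrary maps. Fibrations
are then determined by cofibrations and weak equivalences.
-/

section Retract

variable {M : Type u} [Category.{v} M] {X Y Z : M} {i : X ⟶ Z} {p : Z ⟶ Y} {f : X ⟶ Y}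

lemma isRetractOfHom_snd_of_fac (hfac : i ≫ p = f) [HasLiftingProperty i f] :
    IsRetractOfHom f p := by
  have sq : CommSq (𝟙 X) i f p := ⟨by simp [hfac]⟩
  exact ⟨i, sq.lift, 𝟙 Y, 𝟙 Y, sq.fac_left, Category.id_comp _, by simp [hfac],
    by simp [sq.fac_right]⟩

lemma isRetractOfHom_fst_of_fac (hfac : i ≫ p = f) [HasLiftingProperty f p] :
    IsRetractOfHom f i := by
  have sq : CommSq i f p (𝟙 Y) := ⟨by simp [hfac]⟩
  exact ⟨𝟙 X, 𝟙 X, sq.lift, p, Category.id_comp _, sq.fac_right, by simp [sq.fac_left],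
    by simp [hfac]⟩

end Retract

namespace ModelStructure

variable {M : Type u} [Category.{v} M]

instance (S : ModelStructure M) : S.W.HasTwoOutOfThreeProperty := S.two_out_of_three

lemma fib_of_hasLiftingProperty (S : ModelStructure M) {X Y : M} (p : X ⟶ Y)
    (h : ∀ ⦃A B : M⦄ (i : A ⟶ B), S.Cof i → S.W i → HasLiftingProperty i p) : S.Fib p := by
  obtain ⟨Z, j, r, hj, hwj, hr, hfac⟩ := S.fact_acof_fib p
  have := h j hj hwj
  exact S.fib_retract p r (isRetractOfHom_snd_of_fac hfac) hr

lemma fib_and_w_of_hasLiftingProperty (S : ModelStructure M) {X Y : M} (p : X ⟶ Y)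
    (h : ∀ ⦃A B : M⦄ (i : A ⟶ B), S.Cof i → HasLiftingProperty i p) : S.Fib p ∧ S.W p := by
  obtain ⟨Z, c, q, hc, hq, hwq, hfac⟩ := S.fact_cof_afib p
  have := h c hc
  have hret := isRetractOfHom_snd_of_fac hfac
  exact ⟨S.fib_retract p q hret hq, S.w_retract p q hret hwq⟩

lemma cof_of_hasLiftingProperty (S : ModelStructure M) {A B : M} (i : A ⟶ B)
    (h : ∀ ⦃X Y : M⦄ (p : X ⟶ Y), S.Fib p → S.W p → HasLiftingProperty i p) : S.Cof i := by
  obtain ⟨Z, c, t, hc, ht, hwt, hfac⟩ := S.fact_cof_afib i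
  have := h t ht hwt
  exact S.cof_retract i c (isRetractOfHom_fst_of_fac hfac) hc

lemma fib_comp (S : ModelStructure M) {X Y Z : M} {p : X ⟶ Y} {q : Y ⟶ Z}
    (hp : S.Fib p) (hq : S.Fib q) : S.Fib (p ≫ q) :=
  S.fib_of_hasLiftingProperty _ fun _ _ i hi hwi =>
    have := S.lift_acof_fib i p hi hwi hp
    have := S.lift_acof_fib i q hi hwi hq
    inferInstance

lemma cof_comp (S : ModelStructure M) {A B C : M} {i : A ⟶ B} {j : B ⟶ C}
    (hi : S.Cof i) (hj : S.Cof j) : S.Cof (i ≫ j) :=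
  S.cof_of_hasLiftingProperty _ fun _ _ p hp hwp =>
    have := S.lift_cof_afib i p hi hp hwp
    have := S.lift_cof_afib j p hj hp hwp
    inferInstance

section Fibrant

variable [HasTerminal M] (S : ModelStructure M)

lemma fibrant_of_fib {X Y : M} {p : X ⟶ Y} (hp : S.Fib p) (hY : S.Fibrant Y) :
    S.Fibrant X := by
  rw [Fibrant, ← terminal.comp_from p]
  exact S.fib_comp hp hY

lemma exists_acof_to_fibrant (X : M) :
    ∃ (X' : M) (j : X ⟶ X'), S.Cof j ∧ S.W j ∧ S.Fibrant X' := by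
  obtain ⟨X', j, p, hj, hwj, hp, -⟩ := S.fact_acof_fib (terminal.from X)
  exact ⟨X', j, hj, hwj, by rwa [Fibrant, ← terminal.hom_ext p (terminal.from X')]⟩

lemma exists_retraction_of_acof {C D : M} {j : C ⟶ D} (hj : S.Cof j) (hwj : S.W j)
    (hC : S.Fibrant C) : ∃ r : D ⟶ C, j ≫ r = 𝟙 C := by
  have := S.lift_acof_fib j (terminal.from C) hj hwj hC
  have sq : CommSq (𝟙 C) j (terminal.from C) (terminal.from D) := ⟨terminal.hom_ext _ _⟩
  exact ⟨sq.lift, sq.fac_left⟩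

end Fibrant

section Comparison

variable {S T : ModelStructure M}

lemma fib_and_w_of_cof_eq (hcof : S.Cof = T.Cof) {X Y : M} {p : X ⟶ Y} (hp : S.Fib p)
    (hwp : S.W p) : T.Fib p ∧ T.W p :=
  T.fib_and_w_of_hasLiftingProperty p fun _ _ i hi => S.lift_cof_afib i p (hcof ▸ hi) hp hwp

lemma fib_le_of_cof_eq_of_w_eq (hcof : S.Cof = T.Cof) (hW : S.W = T.W) : S.Fib ≤ T.Fib :=
  fun _ _ p hp => T.fib_of_hasLiftingProperty p fun _ _ i hi hwi =>
    S.lift_acof_fib i p (hcof ▸ hi) (hW ▸ hwi) hp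

variable [HasTerminal M]

lemma w_of_acof_of_fibrant (hcof : S.Cof = T.Cof) {C D : M} {j : C ⟶ D} (hj : S.Cof j)
    (hwj : S.W j) (hC : S.Fibrant C) (hD : S.Fibrant D) : T.W j := by
  obtain ⟨ρ, hρ⟩ := S.exists_retraction_of_acof hj hwj hC
  obtain ⟨G, c, t, hc, ht, hwt, hfac⟩ := T.fact_cof_afib ρ
  have hwρ : S.W ρ := S.W.of_precomp j ρ hwj (hρ ▸ S.w_id C)
  have hwc : S.W c :=
    S.W.of_postcomp c t (fib_and_w_of_cof_eq hcof.symm ht hwt).2 (hfac ▸ hwρ)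
  obtain ⟨ρc, hρc⟩ := S.exists_retraction_of_acof (hcof ▸ hc) hwc hD
  have hwjc : T.W (j ≫ c) :=
    T.W.of_postcomp _ t hwt (by rw [Category.assoc, hfac, hρ]; exact T.w_id C)
  refine T.w_retract j (j ≫ c) ⟨𝟙 C, 𝟙 C, c, ρc, Category.id_comp _, hρc, by simp, ?_⟩ hwjc
  rw [Category.assoc, hρc, Category.comp_id, Category.id_comp]

lemma fib_of_fib_of_fibrant (hcof : S.Cof = T.Cof) {C B : M} {q : C ⟶ B} (hq : T.Fib q)
    (hC : S.Fibrant C) (hB : S.Fibrant B) : S.Fib q := by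
  obtain ⟨D, j, r, hj, hwj, hr, hfac⟩ := S.fact_acof_fib q
  have hD : S.Fibrant D := S.fibrant_of_fib hr hB
  have := T.lift_acof_fib j q (hcof ▸ hj) (w_of_acof_of_fibrant hcof hj hwj hC hD) hq
  exact S.fib_retract q r (isRetractOfHom_snd_of_fac hfac) hr

lemma w_of_acof_of_fibrant_codomain (hcof : S.Cof = T.Cof)
    (hfib : ∀ X : M, S.Fibrant X ↔ T.Fibrant X) {A B : M} {v : A ⟶ B} (hv : S.Cof v)
    (hwv : S.W v) (hB : S.Fibrant B) : T.W v := by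
  obtain ⟨C, k, q, hk, hwk, hq, hfac⟩ := T.fact_acof_fib v
  have hC : S.Fibrant C := (hfib C).2 (T.fibrant_of_fib hq ((hfib B).1 hB))
  have := S.lift_acof_fib v q hv hwv (fib_of_fib_of_fibrant hcof hq hC hB)
  exact T.w_retract v k (isRetractOfHom_fst_of_fac hfac) hwk

lemma w_of_acof (hcof : S.Cof = T.Cof) (hfib : ∀ X : M, S.Fibrant X ↔ T.Fibrant X)
    {A B : M} {u : A ⟶ B} (hu : S.Cof u) (hwu : S.W u) : T.W u := by
  obtain ⟨B', j, hj, hwj, hB'⟩ := T.exists_acof_to_fibrant B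
  have hwjS : S.W j := w_of_acof_of_fibrant_codomain hcof.symm (fun X => (hfib X).symm)
    hj hwj hB'
  have hwuj : T.W (u ≫ j) := w_of_acof_of_fibrant_codomain hcof hfib
    (S.cof_comp hu (hcof ▸ hj)) (S.W.comp_mem u j hwu hwjS) ((hfib B').2 hB')
  exact T.W.of_postcomp u j hwj hwuj

lemma w_le_of_cof_eq_of_fibrant_iff (hcof : S.Cof = T.Cof)
    (hfib : ∀ X : M, S.Fibrant X ↔ T.Fibrant X) : S.W ≤ T.W := by
  intro A B f hf
  obtain ⟨Z, i, p, hi, hp, hwp, rfl⟩ := S.fact_cof_afib f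
  have hwi : S.W i := S.W.of_postcomp i p hwp hf
  exact T.W.comp_mem i p (w_of_acof hcof hfib hi hwi) (fib_and_w_of_cof_eq hcof hp hwp).2

end Comparison

end ModelStructure

/-- Two model structures on the same category with the same class of
cofibrations and the same class of fibrant objects are equal: they have the same weak
equivalences and the same fibrations. -/
theorem modelStructure_eq_of_cof_eq_of_fibrant_iff
    {M : Type u} [Category.{v} M] [HasTerminal M]
    (S T : ModelStructure M) (hcof : S.Cof = T.Cof)
    (hfib : ∀ X : M, S.Fibrant X ↔ T.Fibrant X) :
    S.W = T.W ∧ S.Fib = T.Fib := by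
  have hW : S.W = T.W := le_antisymm (ModelStructure.w_le_of_cof_eq_of_fibrant_iff hcof hfib)
    (ModelStructure.w_le_of_cof_eq_of_fibrant_iff hcof.symm fun X => (hfib X).symm)
  exact ⟨hW, le_antisymm (ModelStructure.fib_le_of_cof_eq_of_w_eq hcof hW)
    (ModelStructure.fib_le_of_cof_eq_of_w_eq hcof.symm hW.symm)⟩
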